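/- Let X be a strongly zero-dimensional metrizable topological space that is σ-compact and satisfies 3 ≤ card(X) ≤ 𝔠. Then the set R(X) of all rigid metrics in Met(X) is comeager in (Met(X), D_X). -/

import Mathlib

/-- A metric on `X` (as a distance function) that induces the topology of `X`;
an element of the space of metrics `Met(X)`. -/
structure MetricOn (X : Type*) [TopologicalSpace X] where
  toFun : X → X → ℝ
  symm : ∀ x y, toFun x y = toFun y x
  refl : ∀ x, toFun x x = 0
  eq_of : ∀ x y, toFun x y = 0 → x = y
  triangle : ∀ x y z, toFun x z ≤ toFun x y + toFun y z
  isOpen_iff : ∀ s : Set X, IsOpen s ↔ ∀ x ∈ s, ∃ ε > 0, ∀ y, toFun x y < ε → y ∈ s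

/-- The supremum distance `D_X(d,e) = sup_{x,y} |d(x,y) - e(x,y)| ∈ [0,∞]` on `Met(X)`. -/
noncomputable def supDist {X : Type*} [TopologicalSpace X] (d e : MetricOn X) : ENNReal :=
  ⨆ p : X × X, ENNReal.ofReal |d.toFun p.1 p.2 - e.toFun p.1 p.2|

/-- The topology on `Met(X)` generated by the open balls of the supremum distance. -/
noncomputable instance metricOnTopology (X : Type*) [TopologicalSpace X] :
    TopologicalSpace (MetricOn X) :=
  TopologicalSpace.generateFrom
    {B | ∃ (d : MetricOn X) (ε : ℝ), 0 < ε ∧ B = {e | supDist d e < ENNReal.ofReal ε}}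

/-- A metric is rigid if every bijective self-isometry is the identity map. -/
def RigidM {X : Type*} [TopologicalSpace X] (d : MetricOn X) : Prop :=
  ∀ f : X → X, Function.Bijective f →
    (∀ x y, d.toFun (f x) (f y) = d.toFun x y) → f = id

/-- A space is strongly zero-dimensional if any two disjoint closed sets are separated
by a clopen set. -/
def StronglyZeroDim (X : Type*) [TopologicalSpace X] : Prop :=
  ∀ A B : Set X, IsClosed A → IsClosed B → A ∩ B = ∅ →
    ∃ V : Set X, IsClopen V ∧ A ⊆ V ∧ V ∩ B = ∅

/-!
Strong rigidity (`d(x,y) ≠ d(a,b)` whenever `x ∉ {y, a, b}`) implies rigidity once `|X| ≥ 3`: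
a nontrivial isometry moves some `x`, and `x` is far from `y`, `f x`, `f y` for a suitable `y`.
On each compact piece `Kₙ` of `X`, "`d(x,y)` and `d(a,b)` differ by at least `γ` whenever `x`
is `1/(m+1)`-far from `y, a, b`" is an open condition on `d`, and strongly rigid metrics satisfy
it for some `γ > 0` by compactness; so it suffices to show that strongly rigid metrics are dense.

Given `d` and a rational `q > 0`, strong zero-dimensionality and the Lindelöf property give
locally constant maps `pₙ : X → ℕ` whose fibres have `d`-diameter `≤ q 2⁻ⁿ`. Put
`φ x = ∑ 2^(-t!)` over the codes `t = ⟨n, pₙ x⟩` of the cells containing `x`, and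
`e(x,y) = q⌈d(x₀,y₀)/q⌉ + q 2^(-first level separating x and y) + q |φ x - φ y|`,
where `x₀` is a representative of the level-`0` cell of `x`. Then `e` induces the topology of `X`
and is `6q`-close to `d`. Its first two summands are rational, while every integer combination
`φ x - φ y - s (φ a - φ b)` with `x ∉ {y, a, b}` is a Liouville number (far out, the codes of the
cells of `x` are used by no other point), hence irrational; so `e` is strongly rigid.
-/

open Filter Topology Nat

namespace MetricOn

variable {X : Type*} [TopologicalSpace X] (d : MetricOn X)

lemma nonneg (x y : X) : 0 ≤ d.toFun x y := by
  linarith [d.triangle x y x, d.symm y x, d.refl x]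

lemma pos_of_ne {x y : X} (h : x ≠ y) : 0 < d.toFun x y :=
  (d.nonneg x y).lt_of_ne fun h0 => h (d.eq_of x y h0.symm)

abbrev toMetricSpace : MetricSpace X :=
  MetricSpace.ofDistTopology d.toFun d.refl d.symm d.triangle d.isOpen_iff d.eq_of

lemma continuous_uncurry : Continuous fun p : X × X => d.toFun p.1 p.2 :=
  letI := d.toMetricSpace
  continuous_dist

lemma isClosed_singleton (d : MetricOn X) (x : X) : IsClosed {x} :=
  letI := d.toMetricSpace
  _root_.isClosed_singleton

@[fun_prop]
lemma continuous_comp {Y : Type*} [TopologicalSpace Y] {f g : Y → X} (hf : Continuous f)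
    (hg : Continuous g) : Continuous fun y => d.toFun (f y) (g y) :=
  d.continuous_uncurry.comp (hf.prodMk hg)

def ofNhds (e : X → X → ℝ) (symm : ∀ x y, e x y = e y x) (refl : ∀ x, e x x = 0)
    (eq_of : ∀ x y, e x y = 0 → x = y) (triangle : ∀ x y z, e x z ≤ e x y + e y z)
    (eventually_lt : ∀ x, ∀ ε > 0, ∀ᶠ y in 𝓝 x, e x y < ε)
    (exists_lt : ∀ x, ∀ ε > 0, ∃ δ > 0, ∀ y, e x y < δ → d.toFun x y < ε) : MetricOn X where
  toFun := e
  symm := symm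
  refl := refl
  eq_of := eq_of
  triangle := triangle
  isOpen_iff s := by
    refine ⟨fun hs x hx => ?_, fun h => isOpen_iff_mem_nhds.2 fun x hx => ?_⟩
    · obtain ⟨ε, hε, hball⟩ := (d.isOpen_iff s).1 hs x hx
      obtain ⟨δ, hδ, hδε⟩ := exists_lt x ε hε
      exact ⟨δ, hδ, fun y hy => hball y (hδε y hy)⟩
    · obtain ⟨ε, hε, hball⟩ := h x hx
      exact Filter.mem_of_superset (eventually_lt x ε hε) fun y hy => hball y hy

end MetricOn

section SupDist

variable {X : Type*} [TopologicalSpace X]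

lemma supDist_le_ofReal {d e : MetricOn X} {r : ℝ} (h : ∀ x y, |d.toFun x y - e.toFun x y| ≤ r) :
    supDist d e ≤ ENNReal.ofReal r :=
  iSup_le fun p => ENNReal.ofReal_le_ofReal (h p.1 p.2)

lemma ofReal_abs_sub_le_supDist (d e : MetricOn X) (x y : X) :
    ENNReal.ofReal |d.toFun x y - e.toFun x y| ≤ supDist d e :=
  le_iSup (fun p : X × X => ENNReal.ofReal |d.toFun p.1 p.2 - e.toFun p.1 p.2|) (x, y)

lemma abs_sub_lt_of_supDist_lt {d e : MetricOn X} {r : ℝ} (h : supDist d e < ENNReal.ofReal r)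
    (x y : X) : |d.toFun x y - e.toFun x y| < r :=
  (ENNReal.ofReal_lt_ofReal_iff_of_nonneg (abs_nonneg _)).1 <|
    (ofReal_abs_sub_le_supDist d e x y).trans_lt h

lemma supDist_self (d : MetricOn X) : supDist d d = 0 := by
  simp [supDist]

lemma supDist_triangle (d e f : MetricOn X) : supDist d f ≤ supDist d e + supDist e f :=
  iSup_le fun p => (ENNReal.ofReal_le_ofReal (abs_sub_le _ (e.toFun p.1 p.2) _)).trans <|
    ENNReal.ofReal_add_le.trans <|
      add_le_add (ofReal_abs_sub_le_supDist d e _ _) (ofReal_abs_sub_le_supDist e f _ _)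

def supBall (d : MetricOn X) (ε : ℝ) : Set (MetricOn X) := {e | supDist d e < ENNReal.ofReal ε}

lemma exists_supBall_subset_supBall {d₀ d : MetricOn X} {ε₀ : ℝ} (h : d ∈ supBall d₀ ε₀) :
    ∃ ε > 0, supBall d ε ⊆ supBall d₀ ε₀ := by
  have hε₀ : 0 < ε₀ := ENNReal.ofReal_pos.1 (pos_of_gt h)
  have hfin : supDist d₀ d ≠ ⊤ := h.ne_top
  have hlt : (supDist d₀ d).toReal < ε₀ := by
    rw [← ENNReal.ofReal_lt_ofReal_iff hε₀, ENNReal.ofReal_toReal hfin]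
    exact h
  refine ⟨ε₀ - (supDist d₀ d).toReal, sub_pos.2 hlt, fun e he => ?_⟩
  calc supDist d₀ e ≤ supDist d₀ d + supDist d e := supDist_triangle d₀ d e
    _ < supDist d₀ d + ENNReal.ofReal (ε₀ - (supDist d₀ d).toReal) :=
        ENNReal.add_lt_add_left hfin he
    _ = ENNReal.ofReal ε₀ := by
        nth_rw 1 [← ENNReal.ofReal_toReal hfin]
        rw [← ENNReal.ofReal_add ENNReal.toReal_nonneg
          (sub_pos.2 hlt).le, add_sub_cancel]

lemma isTopologicalBasis_supBall :
    TopologicalSpace.IsTopologicalBasis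
      {B : Set (MetricOn X) | ∃ d ε, 0 < ε ∧ B = supBall d ε} where
  exists_subset_inter := by
    rintro _ ⟨d₁, ε₁, -, rfl⟩ _ ⟨d₂, ε₂, -, rfl⟩ e ⟨he₁, he₂⟩
    obtain ⟨δ₁, hδ₁, h₁⟩ := exists_supBall_subset_supBall he₁
    obtain ⟨δ₂, hδ₂, h₂⟩ := exists_supBall_subset_supBall he₂
    refine ⟨supBall e (min δ₁ δ₂), ⟨e, _, lt_min hδ₁ hδ₂, rfl⟩, ?_, fun f hf => ⟨h₁ ?_, h₂ ?_⟩⟩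
    · simp [supBall, supDist_self, hδ₁, hδ₂]
    · exact hf.trans_le (ENNReal.ofReal_le_ofReal (min_le_left _ _))
    · exact hf.trans_le (ENNReal.ofReal_le_ofReal (min_le_right _ _))
  sUnion_eq := Set.eq_univ_of_forall fun d =>
    ⟨supBall d 1, ⟨d, 1, one_pos, rfl⟩, by simp [supBall, supDist_self]⟩
  eq_generateFrom := rfl

lemma isOpen_iff_exists_supBall_subset {U : Set (MetricOn X)} :
    IsOpen U ↔ ∀ d ∈ U, ∃ ε > 0, supBall d ε ⊆ U := by
  rw [isTopologicalBasis_supBall.isOpen_iff]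
  constructor
  · rintro h d hd
    obtain ⟨_, ⟨d₀, ε₀, -, rfl⟩, hd₀, hsub⟩ := h d hd
    obtain ⟨ε, hε, hball⟩ := exists_supBall_subset_supBall hd₀
    exact ⟨ε, hε, hball.trans hsub⟩
  · rintro h d hd
    obtain ⟨ε, hε, hsub⟩ := h d hd
    exact ⟨supBall d ε, ⟨d, ε, hε, rfl⟩, by simp [supBall, supDist_self, hε], hsub⟩

end SupDist

section StronglyRigid

variable {X : Type*} [TopologicalSpace X]

/-- Equivalently: distinct pairs of distinct points are at distinct distances. -/
def StronglyRigid (e : MetricOn X) : Prop :=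
  ∀ x y a b, x ≠ y → x ≠ a → x ≠ b → e.toFun x y ≠ e.toFun a b

lemma StronglyRigid.rigidM (h3 : 3 ≤ Cardinal.mk X) {e : MetricOn X} (he : StronglyRigid e) :
    RigidM e := by
  intro f hf hiso
  funext x
  by_contra hfx
  obtain ⟨z, hz⟩ := hf.2 x
  obtain ⟨y, hyx, hyz⟩ := Cardinal.exists_ne_ne_of_three_le h3 x z
  have hfy : x ≠ f y := fun h => hyz (hf.1 (hz.trans h)).symm
  exact he x y (f x) (f y) (Ne.symm hyx) (Ne.symm hfx) hfy (hiso x y).symm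

/-- Positive exactly when `e(x,y) ≠ e(a,b)` or `x` is closer than `r` to one of `y, a, b`. -/
def gap (e : MetricOn X) (r : ℝ) (w : X × X × X × X) : ℝ :=
  max (r - min (e.toFun w.1 w.2.1) (min (e.toFun w.1 w.2.2.1) (e.toFun w.1 w.2.2.2)))
    |e.toFun w.1 w.2.1 - e.toFun w.2.2.1 w.2.2.2|

lemma continuous_gap (e : MetricOn X) (r : ℝ) : Continuous (gap e r) := by
  unfold gap; fun_prop

lemma StronglyRigid.gap_pos {e : MetricOn X} (he : StronglyRigid e) {r : ℝ} (hr : 0 < r)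
    (w : X × X × X × X) : 0 < gap e r w := by
  obtain ⟨x, y, a, b⟩ := w
  rcases lt_or_ge (min (e.toFun x y) (min (e.toFun x a) (e.toFun x b))) r with hlt | hge
  · exact lt_max_of_lt_left (sub_pos.2 hlt)
  · simp only [le_min_iff] at hge
    have hne : ∀ z, r ≤ e.toFun x z → x ≠ z := fun z hz hxz => by
      rw [hxz, e.refl] at hz; linarith
    exact lt_max_of_lt_right (abs_pos.2 (sub_ne_zero.2
      (he x y a b (hne y hge.1) (hne a hge.2.1) (hne b hge.2.2))))

lemma gap_sub_le_gap {e f : MetricOn X} {δ : ℝ} (h : ∀ x y, |e.toFun x y - f.toFun x y| ≤ δ)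
    (r : ℝ) (w : X × X × X × X) : gap e r w - 2 * δ ≤ gap f r w := by
  obtain ⟨x, y, a, b⟩ := w
  have h' : ∀ u v, f.toFun u v ≤ e.toFun u v + δ := fun u v => by linarith [(abs_le.1 (h u v)).1]
  dsimp only [gap]
  rw [← max_sub_sub_right]
  refine max_le_max ?_ ?_
  · have : min (f.toFun x y) (min (f.toFun x a) (f.toFun x b))
        ≤ min (e.toFun x y) (min (e.toFun x a) (e.toFun x b)) + δ := by
      simp only [← min_add_add_right]
      exact min_le_min (h' x y) (min_le_min (h' x a) (h' x b))
    have hδ : 0 ≤ δ := (abs_nonneg (e.toFun x x - f.toFun x x)).trans (h x x)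
    linarith
  · have hdiff : |(e.toFun x y - e.toFun a b) - (f.toFun x y - f.toFun a b)| ≤ 2 * δ :=
      calc _ = |(e.toFun x y - f.toFun x y) - (e.toFun a b - f.toFun a b)| := by ring_nf
        _ ≤ |e.toFun x y - f.toFun x y| + |e.toFun a b - f.toFun a b| := abs_sub _ _
        _ ≤ 2 * δ := by linarith [h x y, h a b]
    linarith [abs_sub_abs_le_abs_sub (e.toFun x y - e.toFun a b) (f.toFun x y - f.toFun a b)]

def gapSet (K : Set X) (r : ℝ) : Set (MetricOn X) :=
  {e | ∃ γ > 0, ∀ w ∈ K ×ˢ K ×ˢ K ×ˢ K, γ ≤ gap e r w}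

lemma isOpen_gapSet (K : Set X) (r : ℝ) : IsOpen (gapSet K r) := by
  refine isOpen_iff_exists_supBall_subset.2 fun e ⟨γ, hγ, he⟩ =>
    ⟨γ / 4, by positivity, fun f hf => ?_⟩
  have hclose : ∀ x y, |e.toFun x y - f.toFun x y| ≤ γ / 4 :=
    fun x y => (abs_sub_lt_of_supDist_lt hf x y).le
  exact ⟨γ / 2, by positivity, fun w hw => by linarith [he w hw, gap_sub_le_gap hclose r w]⟩

lemma StronglyRigid.mem_gapSet {e : MetricOn X} (he : StronglyRigid e) {K : Set X}
    (hK : IsCompact K) {r : ℝ} (hr : 0 < r) : e ∈ gapSet K r :=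
  (hK.prod (hK.prod (hK.prod hK))).exists_forall_le' (continuous_gap e r).continuousOn
    fun w _ => he.gap_pos hr w

lemma stronglyRigid_of_forall_mem_gapSet [SigmaCompactSpace X] {e : MetricOn X}
    (h : ∀ n m : ℕ, e ∈ gapSet (compactCovering X n) (1 / (m + 1))) : StronglyRigid e := by
  classical
  intro x y a b hxy hxa hxb heq
  obtain ⟨n, hn⟩ : ∃ n, ∀ z ∈ ({x, y, a, b} : Finset X), z ∈ compactCovering X n := by
    choose k hk using fun z : X => exists_mem_compactCovering z
    exact ⟨({x, y, a, b} : Finset X).sup k, fun z hz =>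
      compactCovering_subset X (Finset.le_sup hz) (hk z)⟩
  obtain ⟨m, hm⟩ := exists_nat_one_div_lt (lt_min (e.pos_of_ne hxy)
    (lt_min (e.pos_of_ne hxa) (e.pos_of_ne hxb)))
  obtain ⟨γ, hγ, hgap⟩ := h n m
  have := hgap (x, y, a, b) ⟨hn x (by simp), hn y (by simp), hn a (by simp), hn b (by simp)⟩
  rcases le_max_iff.1 this with hfar | hsame
  · linarith
  · rw [heq, sub_self, abs_zero] at hsame
    linarith

end StronglyRigid

section FactorialSeries

variable {c : ℕ → ℤ} {N : ℝ}

lemma abs_mul_inv_two_pow_factorial_le (hN : ∀ t, |(c t : ℝ)| ≤ N) (t : ℕ) :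
    ‖(c t : ℝ) * 2⁻¹ ^ (t !)‖ ≤ N * 2⁻¹ ^ t := by
  rw [Real.norm_eq_abs, abs_mul, abs_of_pos (by positivity : (0:ℝ) < 2⁻¹ ^ t !)]
  exact mul_le_mul (hN t) (pow_le_pow_of_le_one (by norm_num) (by norm_num) (self_le_factorial t))
    (by positivity) ((abs_nonneg _).trans (hN 0))

lemma summable_mul_inv_two_pow_factorial (hN : ∀ t, |(c t : ℝ)| ≤ N) :
    Summable fun t => (c t : ℝ) * 2⁻¹ ^ t ! :=
  Summable.of_norm_bounded ((summable_geometric_of_lt_one (by norm_num)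
    (by norm_num : (2:ℝ)⁻¹ < 1)).mul_left N) (abs_mul_inv_two_pow_factorial_le hN)

lemma abs_tsum_le_two_mul_of_abs_le (hN : ∀ t, |(c t : ℝ)| ≤ N) :
    |∑' t, (c t : ℝ) * 2⁻¹ ^ t !| ≤ 2 * N := by
  rw [← Real.norm_eq_abs, mul_comm]
  refine tsum_of_norm_bounded ?_ (abs_mul_inv_two_pow_factorial_le hN)
  simpa [one_div] using hasSum_geometric_two.mul_left N

lemma abs_tsum_mul_inv_two_pow_factorial_le (hN : ∀ t, |(c t : ℝ)| ≤ N) {m : ℕ} (hm : 1 ≤ m) :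
    |∑' j, (c (j + m) : ℝ) * 2⁻¹ ^ (j + m)!| ≤ 2 * N * 2⁻¹ ^ m ! := by
  have hg : HasSum (fun j : ℕ => N * 2⁻¹ ^ m ! * (1 / 2) ^ j) (N * 2⁻¹ ^ m ! * 2) :=
    hasSum_geometric_two.mul_left _
  rw [show 2 * N * 2⁻¹ ^ m ! = N * 2⁻¹ ^ m ! * 2 by ring, ← Real.norm_eq_abs]
  refine tsum_of_norm_bounded hg fun j => ?_
  rw [Real.norm_eq_abs, abs_mul, abs_of_pos (by positivity : (0:ℝ) < 2⁻¹ ^ (j + m)!), one_div,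
    mul_assoc, ← pow_add]
  exact mul_le_mul (hN _) (pow_le_pow_of_le_one (by norm_num) (by norm_num)
    (by linarith [Nat.add_factorial_le_factorial_add j hm])) (by positivity)
    ((abs_nonneg _).trans (hN 0))

lemma mul_inv_two_pow_lt {j L M : ℕ} (hN : N < 2 ^ j) (hLM : L + j ≤ M) (hN0 : 0 ≤ N) :
    N * 2⁻¹ ^ M < 2⁻¹ ^ L := by
  calc N * (2:ℝ)⁻¹ ^ M ≤ N * 2⁻¹ ^ (L + j) :=
        mul_le_mul_of_nonneg_left (pow_le_pow_of_le_one (by norm_num) (by norm_num) hLM) hN0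
    _ = 2⁻¹ ^ L * (N / 2 ^ j) := by rw [pow_add, inv_pow (2:ℝ) j]; ring
    _ < 2⁻¹ ^ L * 1 := mul_lt_mul_of_pos_left ((div_lt_one (by positivity)).2 hN) (by positivity)
    _ = 2⁻¹ ^ L := mul_one _

/-- The leading term `c (k+1) 2^(-(k+1)!)` of the tail dominates the rest. -/
lemma tsum_mul_inv_two_pow_factorial_tail_ne_zero (hN : ∀ t, |(c t : ℝ)| ≤ N) {k : ℕ} (h2N : 2 * N < 2 ^ k)
    (hck : c (k + 1) ≠ 0) : ∑' j, (c (j + (k + 1)) : ℝ) * 2⁻¹ ^ (j + (k + 1))! ≠ 0 := by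
  have hrest := abs_tsum_mul_inv_two_pow_factorial_le hN (m := k + 2) (by omega)
  have hlt : 2 * N * 2⁻¹ ^ (k + 2)! < 2⁻¹ ^ (k + 1)! := mul_inv_two_pow_lt h2N
    (by rw [factorial_succ (k + 1)]; nlinarith [self_le_factorial (k + 1)])
    (by linarith [(abs_nonneg _).trans (hN 0)])
  have hlead : (2:ℝ)⁻¹ ^ (k + 1)! ≤ |(c (k + 1) : ℝ) * 2⁻¹ ^ (k + 1)!| := by
    rw [abs_mul, abs_of_pos (by positivity : (0:ℝ) < 2⁻¹ ^ (k + 1)!)]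
    exact le_mul_of_one_le_left (by positivity) (by exact_mod_cast Int.one_le_abs hck)
  rw [((summable_nat_add_iff (k + 1)).2 (summable_mul_inv_two_pow_factorial hN)).tsum_eq_zero_add]
  intro h0
  simp only [zero_add, add_assoc, add_comm 1 (k + 1)] at h0
  rw [add_eq_zero_iff_eq_neg.1 h0, abs_neg] at hlead
  linarith

lemma intCast_sum_div_two_pow_factorial (k : ℕ) :
    ((∑ t ∈ Finset.range (k + 1), c t * 2 ^ ((k !) - (t !)) : ℤ) : ℝ) / ((2 ^ k ! : ℤ) : ℝ)
      = ∑ t ∈ Finset.range (k + 1), (c t : ℝ) * 2⁻¹ ^ t ! := by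
  push_cast
  rw [Finset.sum_div]
  refine Finset.sum_congr rfl fun t ht => ?_
  have hle : t ! ≤ k ! := factorial_le (Nat.lt_succ_iff.1 (Finset.mem_range.1 ht))
  rw [pow_sub₀ _ two_ne_zero hle, inv_pow]
  field_simp

/-- The partial sums up to `k` approximate with error `≈ 2^(-(k+1)!) = (2^(-k!))^(k+1)`. -/
lemma liouville_tsum_mul_inv_two_pow_factorial (hN : ∀ t, |(c t : ℝ)| ≤ N)
    (hc : ∃ᶠ t in atTop, c t ≠ 0) : Liouville (∑' t, (c t : ℝ) * 2⁻¹ ^ t !) := by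
  intro n
  obtain ⟨t, ht, hct⟩ := frequently_atTop.1 hc (n + 2 * ⌈N⌉₊ + 1)
  obtain ⟨k, rfl⟩ : ∃ k, t = k + 1 := ⟨t - 1, by omega⟩
  have h2N : 2 * N < 2 ^ k := by
    calc 2 * N ≤ 2 * ⌈N⌉₊ := by linarith [Nat.le_ceil N]
      _ ≤ k := by exact_mod_cast (by omega : 2 * ⌈N⌉₊ ≤ k)
      _ < 2 ^ k := by exact_mod_cast Nat.lt_two_pow_self
  have hsplit := ((summable_mul_inv_two_pow_factorial hN).sum_add_tsum_nat_add (k + 1)).symm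
  refine ⟨∑ t ∈ Finset.range (k + 1), c t * 2 ^ ((k !) - (t !)), 2 ^ k !, ?_, ?_, ?_⟩
  · exact_mod_cast Nat.one_lt_two_pow (factorial_ne_zero k)
  · rw [intCast_sum_div_two_pow_factorial, hsplit]
    simpa using tsum_mul_inv_two_pow_factorial_tail_ne_zero hN h2N hct
  · rw [intCast_sum_div_two_pow_factorial, hsplit, add_sub_cancel_left]
    calc _ ≤ 2 * N * 2⁻¹ ^ (k + 1)! := abs_tsum_mul_inv_two_pow_factorial_le hN (by omega)
      _ < 2⁻¹ ^ (k ! * n) := mul_inv_two_pow_lt h2N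
          (by rw [factorial_succ]; nlinarith [self_le_factorial k])
          (by linarith [(abs_nonneg _).trans (hN 0)])
      _ = 1 / ((2 ^ k ! : ℤ) : ℝ) ^ n := by push_cast; rw [pow_mul, inv_pow, one_div, inv_pow]

end FactorialSeries

section Partitions

variable {X : Type*} [TopologicalSpace X]

open Classical in
lemma isLocallyConstant_nat_find {W : ℕ → Set X} (hW : ∀ n, IsClopen (W n))
    (hcover : ∀ x, ∃ n, x ∈ W n) : IsLocallyConstant fun x => Nat.find (hcover x) := by
  refine IsLocallyConstant.iff_isOpen_fiber.2 fun i => ?_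
  have : (fun x => Nat.find (hcover x)) ⁻¹' {i} = W i ∩ ⋂ k ∈ Finset.range i, (W k)ᶜ := by
    ext x
    simp [Nat.find_eq_iff]
  rw [this]
  exact (hW i).isOpen.inter (isOpen_biInter_finset fun k _ => (hW k).isClosed.isOpen_compl)

lemma exists_clopen_cover_dist_le [LindelofSpace X] (hX : StronglyZeroDim X) (d : MetricOn X)
    {δ : ℝ} (hδ : 0 < δ) : ∃ W : ℕ → Set X, (∀ n, IsClopen (W n)) ∧ (∀ x, ∃ n, x ∈ W n) ∧
      ∀ n, ∀ x ∈ W n, ∀ y ∈ W n, d.toFun x y ≤ δ := by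
  rcases isEmpty_or_nonempty X with hempty | hne
  · exact ⟨fun _ => ∅, fun _ => isClopen_empty, isEmptyElim, fun _ x => isEmptyElim x⟩
  have hV : ∀ x, ∃ V : Set X, IsClopen V ∧ x ∈ V ∧ ∀ y ∈ V, d.toFun x y < δ / 2 := by
    intro x
    have hball : IsOpen {y | d.toFun x y < δ / 2} :=
      (d.isOpen_iff _).2 fun z hz => ⟨δ / 2 - d.toFun x z, sub_pos.2 hz, fun y hy => by
        change d.toFun x z < δ / 2 at hz
        change d.toFun x y < δ / 2
        linarith [d.triangle x z y]⟩
    obtain ⟨V, hV, hxV, hVB⟩ := hX {x} _ (d.isClosed_singleton x) hball.isClosed_compl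
      (by simp [d.refl, hδ])
    exact ⟨V, hV, hxV rfl, fun y hy => by_contra fun h => hVB.subset ⟨hy, h⟩⟩
  choose V hV hxV hVδ using hV
  obtain ⟨t, htc, htU⟩ := LindelofSpace.elim_nhds_subcover V fun x => (hV x).isOpen.mem_nhds (hxV x)
  have hmem : ∀ x, ∃ z ∈ t, x ∈ V z := fun x => by simpa using htU.ge (Set.mem_univ x)
  obtain ⟨u, rfl⟩ := htc.exists_eq_range (hne.elim fun x => (hmem x).imp fun _ h => h.1)
  refine ⟨fun n => V (u n), fun n => hV _, fun x => ?_, fun n x hx y hy => ?_⟩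
  · simpa using hmem x
  · linarith [d.triangle x (u n) y, d.symm (u n) x, hVδ _ x hx, hVδ _ y hy]

lemma exists_isLocallyConstant_dist_le [LindelofSpace X] (hX : StronglyZeroDim X)
    (d : MetricOn X) {δ : ℝ} (hδ : 0 < δ) :
    ∃ p : X → ℕ, IsLocallyConstant p ∧ ∀ x y, p x = p y → d.toFun x y ≤ δ := by
  classical
  obtain ⟨W, hW, hcover, hdiam⟩ := exists_clopen_cover_dist_le hX d hδ
  exact ⟨fun x => Nat.find (hcover x), isLocallyConstant_nat_find hW hcover,
    fun x y hxy => hdiam _ x (Nat.find_spec (hcover x)) y <| by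
      rw [show Nat.find (hcover x) = Nat.find (hcover y) from hxy]
      exact Nat.find_spec (hcover y)⟩

end Partitions

lemma eventually_mul_inv_two_pow_lt (c : ℝ) {ε : ℝ} (hε : 0 < ε) :
    ∀ᶠ n : ℕ in atTop, c * 2⁻¹ ^ n < ε := by
  have := (tendsto_pow_atTop_nhds_zero_of_lt_one (by norm_num : (0:ℝ) ≤ 2⁻¹)
    (by norm_num)).const_mul c
  rw [mul_zero] at this
  exact this.eventually (gt_mem_nhds hε)

lemma exists_int_sub_mul_eq_rat {u v : ℝ} {r : ℚ} (h : |u| - |v| = r) :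
    ∃ (s : ℤ) (r' : ℚ), u - s * v = r' := by
  rcases abs_cases u with ⟨hu, -⟩ | ⟨hu, -⟩ <;> rcases abs_cases v with ⟨hv, -⟩ | ⟨hv, -⟩
  · exact ⟨1, r, by push_cast; linarith⟩
  · exact ⟨-1, r, by push_cast; linarith⟩
  · exact ⟨-1, -r, by push_cast; linarith⟩
  · exact ⟨1, -r, by push_cast; linarith⟩

namespace RigidConstruction

section Cells

variable {X : Type*} (p : ℕ → X → ℕ)

/-- The indicator of the codes `⟨n, pₙ x⟩` of the cells containing `x`. -/
def cellIndicator (x : X) (t : ℕ) : ℤ := if p t.unpair.1 x = t.unpair.2 then 1 else 0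

lemma cellIndicator_pair (x : X) (n k : ℕ) :
    cellIndicator p x (Nat.pair n k) = if p n x = k then 1 else 0 := by
  simp [cellIndicator]

lemma abs_cellIndicator_sub_le (x y : X) (t : ℕ) :
    |((cellIndicator p x t - cellIndicator p y t : ℤ) : ℝ)| ≤ 1 := by
  unfold cellIndicator; split_ifs <;> norm_num

lemma cellIndicator_eq_of_forall_le {x y : X} {n t : ℕ} (h : ∀ k ≤ n, p k x = p k y) (ht : t ≤ n) :
    cellIndicator p x t = cellIndicator p y t := by
  rw [cellIndicator, cellIndicator, h _ ((Nat.unpair_left_le t).trans ht)]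

noncomputable def phi (x : X) : ℝ := ∑' t, (cellIndicator p x t : ℝ) * 2⁻¹ ^ t !

lemma summable_phi (x : X) : Summable fun t => (cellIndicator p x t : ℝ) * 2⁻¹ ^ t ! :=
  summable_mul_inv_two_pow_factorial (N := 1) fun t => by
    unfold cellIndicator; split_ifs <;> norm_num

lemma phi_sub_phi (x y : X) :
    phi p x - phi p y =
      ∑' t, ((cellIndicator p x t - cellIndicator p y t : ℤ) : ℝ) * 2⁻¹ ^ t ! := by
  rw [phi, phi, ← (summable_phi p x).tsum_sub (summable_phi p y)]
  push_cast [sub_mul]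
  rfl

lemma abs_phi_sub_le {x y : X} {n : ℕ} (h : ∀ k ≤ n, p k x = p k y) :
    |phi p x - phi p y| ≤ 2⁻¹ ^ n := by
  have hc := abs_cellIndicator_sub_le p x y
  have hs := summable_mul_inv_two_pow_factorial hc
  rw [phi_sub_phi, ← hs.sum_add_tsum_nat_add (n + 1), Finset.sum_eq_zero fun t ht => by
    rw [cellIndicator_eq_of_forall_le p h (Nat.lt_succ_iff.1 (Finset.mem_range.1 ht)), sub_self,
      Int.cast_zero, zero_mul], zero_add]
  calc _ ≤ 2 * 1 * (2:ℝ)⁻¹ ^ (n + 1)! := abs_tsum_mul_inv_two_pow_factorial_le hc (by omega)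
    _ ≤ 2 * 1 * 2⁻¹ ^ (n + 1) :=
        mul_le_mul_of_nonneg_left (pow_le_pow_of_le_one (by norm_num) (by norm_num)
          (self_le_factorial _)) (by norm_num)
    _ = 2⁻¹ ^ n := by rw [pow_succ]; ring

lemma abs_phi_sub_phi_le_two (x y : X) : |phi p x - phi p y| ≤ 2 := by
  rw [phi_sub_phi]
  simpa using abs_tsum_le_two_mul_of_abs_le (abs_cellIndicator_sub_le p x y)

lemma liouville_phi_sub_sub (hsep : ∀ u v : X, u ≠ v → ∀ᶠ n in atTop, p n u ≠ p n v)
    {x y a b : X} (hxy : x ≠ y) (hxa : x ≠ a) (hxb : x ≠ b) (s : ℤ) :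
    Liouville (phi p x - phi p y - s * (phi p a - phi p b)) := by
  set c : ℕ → ℤ := fun t => (cellIndicator p x t - cellIndicator p y t)
    - s * (cellIndicator p a t - cellIndicator p b t)
  have hc : ∀ t, |(c t : ℝ)| ≤ 1 + |(s : ℝ)| := fun t => by
    have h₁ := abs_cellIndicator_sub_le p x y t
    have h₂ := abs_cellIndicator_sub_le p a b t
    push_cast [c] at h₁ h₂ ⊢
    calc _ ≤ _ := abs_sub _ _
      _ ≤ 1 + |(s : ℝ)| * 1 := by rw [abs_mul]; gcongr
      _ = _ := by ring
  have hs : ∀ u v : X, Summable fun t =>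
      ((cellIndicator p u t - cellIndicator p v t : ℤ) : ℝ) * (2⁻¹ : ℝ) ^ t ! :=
    fun u v => summable_mul_inv_two_pow_factorial (abs_cellIndicator_sub_le p u v)
  have hsum : phi p x - phi p y - s * (phi p a - phi p b) = ∑' t, (c t : ℝ) * 2⁻¹ ^ t ! := by
    rw [phi_sub_phi, phi_sub_phi, ← tsum_mul_left, ← (hs x y).tsum_sub ((hs a b).mul_left _)]
    congr 1; funext t; push_cast [c]; ring
  rw [hsum]
  refine liouville_tsum_mul_inv_two_pow_factorial hc (frequently_atTop.2 fun M => ?_)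
  obtain ⟨n, hny, hna, hnb, hnM⟩ := ((hsep x y hxy).and ((hsep x a hxa).and
    ((hsep x b hxb).and (eventually_ge_atTop M)))).exists
  refine ⟨Nat.pair n (p n x), hnM.trans (Nat.left_le_pair _ _), ?_⟩
  simp [c, cellIndicator_pair, Ne.symm hny, Ne.symm hna, Ne.symm hnb]

lemma phi_injective (hsep : ∀ u v : X, u ≠ v → ∀ᶠ n in atTop, p n u ≠ p n v) :
    Function.Injective (phi p) := by
  intro x y h
  by_contra hxy
  have := (liouville_phi_sub_sub p hsep hxy hxy hxy 0).irrational
  simp only [h, sub_self, Int.cast_zero, mul_zero] at this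
  exact this.ne_zero rfl

noncomputable def rep (x : X) : X := Classical.choose (⟨x, rfl⟩ : ∃ z, p 0 z = p 0 x)

lemma rep_spec (x : X) : p 0 (rep p x) = p 0 x :=
  Classical.choose_spec (⟨x, rfl⟩ : ∃ z, p 0 z = p 0 x)

lemma rep_eq_rep {x y : X} (h : p 0 x = p 0 y) : rep p x = rep p y := by
  unfold rep
  simp_rw [h]

open Classical in
noncomputable def treeDist (q : ℝ) (x y : X) : ℝ :=
  if h : ∃ n, p n x ≠ p n y then q * 2⁻¹ ^ Nat.find h else 0

variable {p} {q : ℝ}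

lemma le_treeDist (hq : 0 ≤ q) {x y : X} {n : ℕ} (hn : p n x ≠ p n y) :
    q * 2⁻¹ ^ n ≤ treeDist p q x y := by
  have h : ∃ n, p n x ≠ p n y := ⟨n, hn⟩
  rw [treeDist, dif_pos h]
  exact mul_le_mul_of_nonneg_left
    (pow_le_pow_of_le_one (by norm_num) (by norm_num) (Nat.find_min' h hn)) hq

lemma treeDist_le_of_forall_le (hq : 0 ≤ q) {x y : X} {n : ℕ} (hxy : ∀ k ≤ n, p k x = p k y) :
    treeDist p q x y ≤ q * 2⁻¹ ^ (n + 1) := by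
  unfold treeDist
  split_ifs with h
  · refine mul_le_mul_of_nonneg_left (pow_le_pow_of_le_one (by norm_num) (by norm_num) ?_) hq
    by_contra hlt
    exact Nat.find_spec h (hxy _ (by omega))
  · positivity

lemma treeDist_nonneg (hq : 0 ≤ q) (x y : X) : 0 ≤ treeDist p q x y := by
  unfold treeDist; split_ifs <;> positivity

lemma treeDist_le (hq : 0 ≤ q) (x y : X) : treeDist p q x y ≤ q := by
  unfold treeDist
  split_ifs
  · exact mul_le_of_le_one_right hq (pow_le_one₀ (by norm_num) (by norm_num))
  · exact hq

lemma treeDist_comm (x y : X) : treeDist p q x y = treeDist p q y x := by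
  by_cases h : ∃ n, p n x ≠ p n y
  · have h' : ∃ n, p n y ≠ p n x := h.imp fun _ => Ne.symm
    rw [treeDist, treeDist, dif_pos h, dif_pos h',
      (Nat.find_min' h (Nat.find_spec h').symm).antisymm (Nat.find_min' h' (Nat.find_spec h).symm)]
  · rw [treeDist, treeDist, dif_neg h, dif_neg fun h' => h (h'.imp fun _ => Ne.symm)]

lemma treeDist_self (x : X) : treeDist p q x x = 0 := by
  simp [treeDist]

lemma treeDist_triangle (hq : 0 ≤ q) (x y z : X) :
    treeDist p q x z ≤ treeDist p q x y + treeDist p q y z := by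
  have hxy := treeDist_nonneg (p := p) hq x y
  have hyz := treeDist_nonneg (p := p) hq y z
  by_cases h : ∃ n, p n x ≠ p n z
  · have hsplit : p (Nat.find h) x ≠ p (Nat.find h) y ∨ p (Nat.find h) y ≠ p (Nat.find h) z := by
      by_contra! hc
      exact Nat.find_spec h (hc.1.trans hc.2)
    rw [treeDist, dif_pos h]
    rcases hsplit with hne | hne <;> linarith [le_treeDist hq hne]
  · rw [treeDist, dif_neg h]
    positivity

lemma exists_rat_treeDist (q : ℚ) (x y : X) : ∃ r : ℚ, treeDist p q x y = r := by
  unfold treeDist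
  split_ifs
  · exact ⟨q * 2⁻¹ ^ _, by push_cast; rfl⟩
  · exact ⟨0, by simp⟩

end Cells

section Distances

variable {X : Type*} [TopologicalSpace X] (d : MetricOn X) (q : ℚ) (p : ℕ → X → ℕ)

def HasSmallFibres : Prop := ∀ n x y, p n x = p n y → d.toFun x y ≤ q * 2⁻¹ ^ n

noncomputable def gridDist (x y : X) : ℝ := q * ⌈d.toFun (rep p x) (rep p y) / q⌉₊

noncomputable def rigidDist (x y : X) : ℝ :=
  gridDist d q p x y + treeDist p q x y + q * |phi p x - phi p y|

variable {d q p}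

lemma HasSmallFibres.eventually_ne (hp : HasSmallFibres d q p) {x y : X} (hxy : x ≠ y) :
    ∀ᶠ n in atTop, p n x ≠ p n y :=
  (eventually_mul_inv_two_pow_lt q (d.pos_of_ne hxy)).mono fun n hn h => (hp n x y h).not_gt hn

lemma gridDist_nonneg (hq : (0 : ℝ) < q) (x y : X) : 0 ≤ gridDist d q p x y :=
  mul_nonneg hq.le (Nat.cast_nonneg _)

lemma gridDist_comm (x y : X) : gridDist d q p x y = gridDist d q p y x := by
  rw [gridDist, gridDist, d.symm]

lemma gridDist_eq_zero {x y : X} (h : p 0 x = p 0 y) : gridDist d q p x y = 0 := by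
  simp [gridDist, rep_eq_rep p h, d.refl]

lemma gridDist_triangle (hq : (0 : ℝ) < q) (x y z : X) :
    gridDist d q p x z ≤ gridDist d q p x y + gridDist d q p y z := by
  simp only [gridDist, ← mul_add]
  refine mul_le_mul_of_nonneg_left ?_ hq.le
  calc (⌈d.toFun (rep p x) (rep p z) / q⌉₊ : ℝ)
      ≤ ⌈d.toFun (rep p x) (rep p y) / q + d.toFun (rep p y) (rep p z) / q⌉₊ := by
        gcongr
        rw [← add_div]
        exact div_le_div_of_nonneg_right (d.triangle _ _ _) hq.le
    _ ≤ _ := by exact_mod_cast Nat.ceil_add_le _ _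

lemma abs_gridDist_sub_le (hq : (0 : ℝ) < q) (hp : HasSmallFibres d q p) (x y : X) :
    |gridDist d q p x y - d.toFun x y| ≤ 3 * q := by
  have hx : d.toFun x (rep p x) ≤ q := by simpa using hp 0 _ _ (rep_spec p x).symm
  have hy : d.toFun y (rep p y) ≤ q := by simpa using hp 0 _ _ (rep_spec p y).symm
  set r := d.toFun (rep p x) (rep p y)
  have hlo : r ≤ gridDist d q p x y := (div_le_iff₀' hq).1 (Nat.le_ceil _)
  have hhi : gridDist d q p x y < r + q := by
    rw [gridDist]
    have := Nat.ceil_lt_add_one (div_nonneg (d.nonneg (rep p x) (rep p y)) hq.le)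
    calc (q : ℝ) * ⌈r / q⌉₊ < q * (r / q + 1) := mul_lt_mul_of_pos_left this hq
      _ = r + q := by field_simp
  rw [abs_le]
  constructor
  · linarith [d.triangle x (rep p x) y, d.triangle (rep p x) (rep p y) y, d.symm (rep p y) y]
  · linarith [d.triangle (rep p x) x (rep p y), d.triangle x y (rep p y), d.symm (rep p x) x]

lemma abs_rigidDist_sub_le (hq : (0 : ℝ) < q) (hp : HasSmallFibres d q p) (x y : X) :
    |rigidDist d q p x y - d.toFun x y| ≤ 6 * q := by
  have hg := abs_le.1 (abs_gridDist_sub_le hq hp x y)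
  have ht := treeDist_nonneg (p := p) hq.le x y
  have ht' := treeDist_le (p := p) hq.le x y
  have hφ : q * |phi p x - phi p y| ≤ q * 2 :=
    mul_le_mul_of_nonneg_left (abs_phi_sub_phi_le_two p x y) hq.le
  have hφ' : 0 ≤ q * |phi p x - phi p y| := by positivity
  rw [rigidDist, abs_le]
  constructor <;> linarith [hg.1, hg.2]

lemma rigidDist_le_of_forall_le (hq : (0 : ℝ) < q) {x y : X} {n : ℕ}
    (hxy : ∀ k ≤ n, p k x = p k y) : rigidDist d q p x y ≤ 2 * q * 2⁻¹ ^ n := by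
  have ht := treeDist_le_of_forall_le hq.le hxy
  have hφ := mul_le_mul_of_nonneg_left (abs_phi_sub_le p hxy) hq.le
  rw [rigidDist, gridDist_eq_zero (hxy 0 (Nat.zero_le n)), zero_add]
  have hn : (q : ℝ) * 2⁻¹ ^ (n + 1) ≤ q * 2⁻¹ ^ n :=
    mul_le_mul_of_nonneg_left (pow_le_pow_of_le_one (by norm_num) (by norm_num) n.le_succ) hq.le
  linarith

lemma eq_of_rigidDist_lt (hq : (0 : ℝ) < q) {x y : X} {n : ℕ}
    (h : rigidDist d q p x y < q * 2⁻¹ ^ n) : p n x = p n y := by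
  by_contra hne
  have := le_treeDist hq.le hne
  have := gridDist_nonneg (d := d) (p := p) hq x y
  have : 0 ≤ q * |phi p x - phi p y| := by positivity
  rw [rigidDist] at h
  linarith

lemma exists_rat_rigidDist (x y : X) :
    ∃ r : ℚ, rigidDist d q p x y = r + q * |phi p x - phi p y| := by
  obtain ⟨r, hr⟩ := exists_rat_treeDist (p := p) q x y
  refine ⟨q * ⌈d.toFun (rep p x) (rep p y) / q⌉₊ + r, ?_⟩
  rw [rigidDist, gridDist, hr]
  push_cast
  ring

lemma rigidDist_ne (hq : (0 : ℝ) < q) (hp : HasSmallFibres d q p) {x y a b : X} (hxy : x ≠ y)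
    (hxa : x ≠ a) (hxb : x ≠ b) : rigidDist d q p x y ≠ rigidDist d q p a b := by
  intro h
  obtain ⟨r₁, hr₁⟩ := exists_rat_rigidDist (d := d) (q := q) (p := p) x y
  obtain ⟨r₂, hr₂⟩ := exists_rat_rigidDist (d := d) (q := q) (p := p) a b
  have habs : |phi p x - phi p y| - |phi p a - phi p b| = ((r₂ - r₁) / q : ℚ) := by
    push_cast
    field_simp
    linarith
  obtain ⟨s, r, hsr⟩ := exists_int_sub_mul_eq_rat habs
  exact (liouville_phi_sub_sub p (fun _ _ => hp.eventually_ne) hxy hxa hxb s).irrational.ne_rat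
    r hsr

lemma rigidDist_triangle (hq : (0 : ℝ) < q) (x y z : X) :
    rigidDist d q p x z ≤ rigidDist d q p x y + rigidDist d q p y z := by
  have := gridDist_triangle (d := d) (p := p) hq x y z
  have := treeDist_triangle (p := p) hq.le x y z
  have := mul_le_mul_of_nonneg_left (abs_sub_le (phi p x) (phi p y) (phi p z)) hq.le
  simp only [rigidDist]
  linarith

lemma rigidDist_comm (x y : X) : rigidDist d q p x y = rigidDist d q p y x := by
  rw [rigidDist, rigidDist, gridDist_comm, treeDist_comm, abs_sub_comm]

lemma rigidDist_self (x : X) : rigidDist d q p x x = 0 := by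
  simp [rigidDist, gridDist_eq_zero, treeDist_self]

lemma eq_of_rigidDist_eq_zero (hq : (0 : ℝ) < q) (hp : HasSmallFibres d q p) {x y : X}
    (h : rigidDist d q p x y = 0) : x = y := by
  have := gridDist_nonneg (d := d) (p := p) hq x y
  have := treeDist_nonneg (p := p) hq.le x y
  have : 0 ≤ q * |phi p x - phi p y| := by positivity
  have hφ : q * |phi p x - phi p y| = 0 := by rw [rigidDist] at h; linarith
  exact phi_injective p (fun _ _ => hp.eventually_ne)
    (sub_eq_zero.1 (abs_eq_zero.1 ((mul_eq_zero.1 hφ).resolve_left hq.ne')))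

lemma eventually_rigidDist_lt (hq : (0 : ℝ) < q) (hloc : ∀ n, IsLocallyConstant (p n)) (x : X)
    {ε : ℝ} (hε : 0 < ε) : ∀ᶠ y in 𝓝 x, rigidDist d q p x y < ε := by
  obtain ⟨n, hn⟩ := (eventually_mul_inv_two_pow_lt (2 * q) hε).exists
  have hnhds : ∀ᶠ y in 𝓝 x, ∀ k ∈ Set.Iic n, p k x = p k y :=
    (eventually_all_finite (Set.finite_Iic n)).2 fun k _ =>
      ((hloc k).eventually_eq x).mono fun _ h => h.symm
  exact hnhds.mono fun y hy => (rigidDist_le_of_forall_le hq hy).trans_lt hn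

lemma exists_rigidDist_lt_imp (hq : (0 : ℝ) < q) (hp : HasSmallFibres d q p) (x : X) {ε : ℝ}
    (hε : 0 < ε) : ∃ δ > 0, ∀ y, rigidDist d q p x y < δ → d.toFun x y < ε := by
  obtain ⟨n, hn⟩ := (eventually_mul_inv_two_pow_lt q hε).exists
  exact ⟨q * 2⁻¹ ^ n, by positivity, fun y hy => (hp n x y (eq_of_rigidDist_lt hq hy)).trans_lt hn⟩

noncomputable def rigidMetric (hq : (0 : ℝ) < q) (hloc : ∀ n, IsLocallyConstant (p n))
    (hp : HasSmallFibres d q p) : MetricOn X :=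
  MetricOn.ofNhds d (rigidDist d q p) rigidDist_comm rigidDist_self
    (fun _ _ => eq_of_rigidDist_eq_zero hq hp) (rigidDist_triangle hq)
    (fun x _ => eventually_rigidDist_lt hq hloc x) (fun x _ => exists_rigidDist_lt_imp hq hp x)

end Distances

end RigidConstruction

open RigidConstruction in
lemma exists_stronglyRigid_supDist_lt {X : Type*} [TopologicalSpace X] [LindelofSpace X]
    (hX : StronglyZeroDim X) (d : MetricOn X) {ε : ℝ} (hε : 0 < ε) :
    ∃ e : MetricOn X, StronglyRigid e ∧ supDist d e < ENNReal.ofReal ε := by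
  obtain ⟨q, hq, hqε⟩ := exists_rat_btwn (by positivity : (0 : ℝ) < ε / 6)
  choose p hloc hp using fun n : ℕ =>
    exists_isLocallyConstant_dist_le hX d (by positivity : (0 : ℝ) < q * 2⁻¹ ^ n)
  refine ⟨rigidMetric hq hloc hp, fun x y a b => rigidDist_ne hq hp, ?_⟩
  calc supDist d (rigidMetric hq hloc hp) ≤ ENNReal.ofReal (6 * q) :=
        supDist_le_ofReal fun x y => by
          rw [abs_sub_comm]
          exact abs_rigidDist_sub_le hq hp x y
    _ < ENNReal.ofReal ε := (ENNReal.ofReal_lt_ofReal_iff hε).2 (by linarith)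

theorem stmt14_general {X : Type} [TopologicalSpace X]
    [SigmaCompactSpace X] (hX : StronglyZeroDim X)
    (h3 : 3 ≤ Cardinal.mk X) :
    ∃ G : Set (MetricOn X),
      IsGδ G ∧ Dense G ∧ G ⊆ {e : MetricOn X | RigidM e} := by
  refine ⟨⋂ (n : ℕ) (m : ℕ), gapSet (compactCovering X n) (1 / (m + 1)), ?_, ?_, ?_⟩
  · exact .iInter fun n => .iInter fun m => (isOpen_gapSet _ _).isGδ
  · refine dense_iff_inter_open.2 fun U hU ⟨d, hd⟩ => ?_
    obtain ⟨ε, hε, hball⟩ := isOpen_iff_exists_supBall_subset.1 hU d hd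
    obtain ⟨e, he, hde⟩ := exists_stronglyRigid_supDist_lt hX d hε
    exact ⟨e, hball hde, Set.mem_iInter₂.2 fun n m =>
      he.mem_gapSet (isCompact_compactCovering X n) (by positivity)⟩
  · exact fun e he => (stronglyRigid_of_forall_mem_gapSet (Set.mem_iInter₂.1 he)).rigidM h3

/-- For a strongly zero-dimensional, `σ`-compact metrizable space `X`
with `3 ≤ card X ≤ 𝔠`, the set `R(X)` of rigid metrics is comeager in `(Met(X), D_X)`,
i.e. it contains a dense `Gδ` subset. -/
theorem stmt14 {X : Type} [TopologicalSpace X] [TopologicalSpace.MetrizableSpace X]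
    [SigmaCompactSpace X] (hX : StronglyZeroDim X)
    (h3 : 3 ≤ Cardinal.mk X) (hcard : Cardinal.mk X ≤ Cardinal.continuum) :
    ∃ G : Set (MetricOn X),
      IsGδ G ∧ Dense G ∧ G ⊆ {e : MetricOn X | RigidM e} :=
  stmt14_general hX h3
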